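/- arXiv:1910.11811 — 4 statements merged into one kernel-verified Lean document; each statement's English description precedes it below -/
import Mathlib

section
/- If permutation groups (A,V) and (B,W) both belong to the class DGR, then their imprimitive wreath product A≀B belongs to DGR. -/
open scoped Classical

/-- The automorphism group of a colored graph, i.e. of a coloring of the
unordered pairs of distinct elements of `V` (values of `E` on diagonal pairs
are irrelevant). -/
def graphAut {V C : Type} (E : Sym2 V → C) : Subgroup (Equiv.Perm V) where
  carrier := {σ | ∀ v w : V, v ≠ w → E s(σ v, σ w) = E s(v, w)}
  one_mem' := by intro v w _; rfl
  mul_mem' := by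
    intro a b ha hb v w hvw
    have hb' := hb v w hvw
    have ha' := ha (b v) (b w) (fun h => hvw (b.injective h))
    simpa [Equiv.Perm.mul_apply] using ha'.trans hb'
  inv_mem' := by
    intro a ha v w hvw
    have h : a⁻¹ v ≠ a⁻¹ w := fun h => hvw (by simpa using congrArg a h)
    have := ha (a⁻¹ v) (a⁻¹ w) h
    simpa using this.symm

/-- The automorphism group of a colored digraph, i.e. of a coloring of the
ordered pairs of elements of `V`. -/
def digraphAut {V C : Type} (E : V → V → C) : Subgroup (Equiv.Perm V) where
  carrier := {σ | ∀ v w : V, E (σ v) (σ w) = E v w}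
  one_mem' := by intro v w; rfl
  mul_mem' := by
    intro a b ha hb v w
    simpa [Equiv.Perm.mul_apply] using (ha (b v) (b w)).trans (hb v w)
  inv_mem' := by
    intro a ha v w
    simpa using (ha (a⁻¹ v) (a⁻¹ w)).symm

/-- The automorphism group of a colored hypergraph, i.e. of a coloring of the
nonempty subsets of `W`. -/
def hyperAut {W C : Type} (E : Set W → C) : Subgroup (Equiv.Perm W) where
  carrier := {σ | ∀ X : Set W, X.Nonempty → E (⇑σ '' X) = E X}
  one_mem' := by intro X hX; simp
  mul_mem' := by
    intro a b ha hb X hX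
    have h1 : ⇑(a * b) '' X = ⇑a '' (⇑b '' X) := by
      rw [Equiv.Perm.coe_mul, Set.image_comp]
    rw [h1, ha _ (hX.image _), hb _ hX]
  inv_mem' := by
    intro a ha X hX
    have h1 : ⇑a '' (⇑a⁻¹ '' X) = X := by
      rw [← Set.image_comp]
      have : ⇑a ∘ ⇑a⁻¹ = id := by funext x; simp
      rw [this, Set.image_id]
    have := ha (⇑a⁻¹ '' X) (hX.image _)
    rw [h1] at this
    exact this.symm

/-- `A` belongs to the class GR: it is the automorphism group of some colored graph. -/
def IsGR {V : Type} (A : Subgroup (Equiv.Perm V)) : Prop :=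
  ∃ (C : Type) (E : Sym2 V → C), graphAut E = A

/-- `A` belongs to the class DGR: it is the automorphism group of some colored digraph. -/
def IsDGR {V : Type} (A : Subgroup (Equiv.Perm V)) : Prop :=
  ∃ (C : Type) (E : V → V → C), digraphAut E = A

/-- `B` belongs to the class BGR: it is the automorphism group of some colored hypergraph. -/
def IsBGR {W : Type} (B : Subgroup (Equiv.Perm W)) : Prop :=
  ∃ (C : Type) (E : Set W → C), hyperAut E = B

/-- `(A, V)` is (permutation isomorphic to) the trivial permutation group `I₂`
on a two-element set. -/
def IsI2 {V : Type} (A : Subgroup (Equiv.Perm V)) : Prop :=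
  A = ⊥ ∧ Nat.card V = 2

/-- The permutation group `A` acts transitively on `V`. -/
def permTransitive {V : Type} (A : Subgroup (Equiv.Perm V)) : Prop :=
  ∀ v w : V, ∃ a ∈ A, a v = w

/-- The orbit of a point under a permutation group. -/
def ptOrbit {V : Type} (A : Subgroup (Equiv.Perm V)) (v : V) : Set V :=
  {u | ∃ a ∈ A, a v = u}

/-- The orbit (2*-orbital) of an unordered pair under a permutation group. -/
def pairOrbit {V : Type} (A : Subgroup (Equiv.Perm V)) (p : Sym2 V) : Set (Sym2 V) :=
  {q | ∃ a ∈ A, Sym2.map ⇑a p = q}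

/-- The orbital of an ordered pair under a permutation group. -/
def orbital {V : Type} (A : Subgroup (Equiv.Perm V)) (x : V × V) : Set (V × V) :=
  {y | ∃ a ∈ A, (a x.1, a x.2) = y}

/-- The closure `cl(A)` of a permutation group `A`: the group of all permutations of `V`
mapping each 2*-orbital of `A` onto itself. -/
def grCl {V : Type} (A : Subgroup (Equiv.Perm V)) : Subgroup (Equiv.Perm V) where
  carrier := {σ | ∀ p : Sym2 V, ¬ p.IsDiag → Sym2.map ⇑σ '' pairOrbit A p = pairOrbit A p}
  one_mem' := by
    intro p hp
    rw [Equiv.Perm.coe_one, Sym2.map_id, Set.image_id]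
  mul_mem' := by
    intro a b ha hb p hp
    rw [Equiv.Perm.coe_mul, Sym2.map_comp, Set.image_comp, hb p hp, ha p hp]
  inv_mem' := by
    intro a ha p hp
    have h1 : Sym2.map ⇑a⁻¹ ∘ Sym2.map ⇑a = id := by
      rw [← Sym2.map_comp]
      have : ⇑a⁻¹ ∘ ⇑a = id := by funext x; simp
      rw [this, Sym2.map_id]
    conv_lhs => rw [← ha p hp, ← Set.image_comp, h1, Set.image_id]

/-- The permutation `α` transposes the orbitals of `A`: it maps every orbital
onto the orbital paired with it. -/
def TransposesOrbitals {V : Type} (A : Subgroup (Equiv.Perm V)) (α : Equiv.Perm V) : Prop :=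
  ∀ x : V × V, (fun y : V × V => (α y.1, α y.2)) '' orbital A x = Prod.swap '' orbital A x

/-- The rank of a permutation group: the (cardinal) number of its orbitals. -/
def orbRank {V : Type} (A : Subgroup (Equiv.Perm V)) : Cardinal :=
  Cardinal.mk {O : Set (V × V) // ∃ x, O = orbital A x}

/-- `nsp A`: the number of pairs `{O, O'}` of distinct mutually paired
(i.e. non-self-paired) orbitals of `A`. -/
noncomputable def nsp {V : Type} (A : Subgroup (Equiv.Perm V)) : ℕ :=
  Nat.card {O : Set (V × V) // (∃ x, O = orbital A x) ∧ Prod.swap '' O ≠ O} / 2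

/-- The type of orbits of a permutation group `(A, V)` on `V`. -/
def orbitType {V : Type} (A : Subgroup (Equiv.Perm V)) : Type :=
  {O : Set V // ∃ v, O = ptOrbit A v}

/-- The imprimitive wreath product `A ≀ B` of permutation groups `(A,V)` and `(B,W)`,
acting on `V × W`. -/
def imprimWr {V W : Type} (A : Subgroup (Equiv.Perm V)) (B : Subgroup (Equiv.Perm W)) :
    Subgroup (Equiv.Perm (V × W)) where
  carrier := {γ | ∃ β ∈ B, ∃ α : W → Equiv.Perm V, (∀ w, α w ∈ A) ∧
    ∀ p : V × W, γ p = (α p.2 p.1, β p.2)}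
  one_mem' := ⟨1, B.one_mem, fun _ => 1, fun _ => A.one_mem, fun p => rfl⟩
  mul_mem' := by
    rintro γ₁ γ₂ ⟨β₁, hβ₁, α₁, hα₁, h₁⟩ ⟨β₂, hβ₂, α₂, hα₂, h₂⟩
    refine ⟨β₁ * β₂, B.mul_mem hβ₁ hβ₂, fun w => α₁ (β₂ w) * α₂ w,
      fun w => A.mul_mem (hα₁ _) (hα₂ _), fun p => ?_⟩
    have h0 : (γ₁ * γ₂) p = γ₁ (γ₂ p) := rfl
    rw [h0, h₂ p, h₁ (α₂ p.2 p.1, β₂ p.2)]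
    rfl
  inv_mem' := by
    rintro γ ⟨β, hβ, α, hα, h⟩
    refine ⟨β⁻¹, B.inv_mem hβ, fun w => (α (β⁻¹ w))⁻¹,
      fun w => A.inv_mem (hα _), fun p => ?_⟩
    have key : γ ((α (β⁻¹ p.2))⁻¹ p.1, β⁻¹ p.2) = p := by
      rw [h]
      simp
    calc γ⁻¹ p = γ⁻¹ (γ ((α (β⁻¹ p.2))⁻¹ p.1, β⁻¹ p.2)) := by rw [key]
    _ = ((α (β⁻¹ p.2))⁻¹ p.1, β⁻¹ p.2) := Equiv.symm_apply_apply γ _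

/-- The wreath product `A Wr B` of permutation groups `(A,V)` and `(B,W)` in its
product action on the set `V^W` of functions `W → V`. -/
def prodWr {V W : Type} (A : Subgroup (Equiv.Perm V)) (B : Subgroup (Equiv.Perm W)) :
    Subgroup (Equiv.Perm (W → V)) where
  carrier := {φ | ∃ β ∈ B, ∃ α : W → Equiv.Perm V, (∀ w, α w ∈ A) ∧
    ∀ (f : W → V) (w : W), φ f w = α w (f (β w))}
  one_mem' := ⟨1, B.one_mem, fun _ => 1, fun _ => A.one_mem, fun f w => rfl⟩
  mul_mem' := by
    rintro φ₁ φ₂ ⟨β₁, hβ₁, α₁, hα₁, h₁⟩ ⟨β₂, hβ₂, α₂, hα₂, h₂⟩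
    refine ⟨β₂ * β₁, B.mul_mem hβ₂ hβ₁, fun w => α₁ w * α₂ (β₁ w),
      fun w => A.mul_mem (hα₁ _) (hα₂ _), fun f w => ?_⟩
    have h0 : (φ₁ * φ₂) f = φ₁ (φ₂ f) := rfl
    rw [h0, h₁ (φ₂ f) w, h₂ f (β₁ w)]
    rfl
  inv_mem' := by
    rintro φ ⟨β, hβ, α, hα, h⟩
    refine ⟨β⁻¹, B.inv_mem hβ, fun w => (α (β⁻¹ w))⁻¹,
      fun w => A.inv_mem (hα _), fun f w => ?_⟩
    have hf : f = φ (φ⁻¹ f) := (Equiv.apply_symm_apply φ f).symm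
    conv_rhs => rw [hf]
    rw [h (φ⁻¹ f) (β⁻¹ w)]
    simp

/-- The parallel multiple `B × I_T` of a permutation group `(B, W)`, acting on `W × T`. -/
def parMul {W : Type} (B : Subgroup (Equiv.Perm W)) (T : Type) :
    Subgroup (Equiv.Perm (W × T)) where
  carrier := {γ | ∃ β ∈ B, ∀ p : W × T, γ p = (β p.1, p.2)}
  one_mem' := ⟨1, B.one_mem, fun p => rfl⟩
  mul_mem' := by
    rintro γ₁ γ₂ ⟨β₁, hβ₁, h₁⟩ ⟨β₂, hβ₂, h₂⟩
    refine ⟨β₁ * β₂, B.mul_mem hβ₁ hβ₂, fun p => ?_⟩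
    have h0 : (γ₁ * γ₂) p = γ₁ (γ₂ p) := rfl
    rw [h0, h₂, h₁]
    rfl
  inv_mem' := by
    rintro γ ⟨β, hβ, h⟩
    refine ⟨β⁻¹, B.inv_mem hβ, fun p => ?_⟩
    have key : γ (β⁻¹ p.1, p.2) = p := by rw [h]; simp
    calc γ⁻¹ p = γ⁻¹ (γ (β⁻¹ p.1, p.2)) := by rw [key]
    _ = (β⁻¹ p.1, p.2) := Equiv.symm_apply_apply γ _

/-- The composition `H2 ∘ H1` of a colored graph `H2` on `W` with a colored graph
`H1` on `V`: a colored graph on `V × W`. -/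
noncomputable def compGraph {V W C : Type} (H2 : Sym2 W → C) (H1 : Sym2 V → C) :
    Sym2 (V × W) → C :=
  Sym2.lift ⟨fun p q => if p.2 = q.2 then H1 s(p.1, q.1) else H2 s(p.2, q.2), by
    intro p q
    dsimp only
    by_cases h : p.2 = q.2
    · rw [if_pos h, if_pos h.symm, Sym2.eq_swap]
    · rw [if_neg h, if_neg (fun hh => h hh.symm), Sym2.eq_swap]⟩

/-- If `A` and `B` belong to DGR, then the imprimitive wreath product
`A ≀ B` belongs to DGR. -/
theorem stmt2 {V W : Type} [Nontrivial V] [Nontrivial W]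
    (A : Subgroup (Equiv.Perm V)) (B : Subgroup (Equiv.Perm W))
    (hA : IsDGR A) (hB : IsDGR B) : IsDGR (imprimWr A B) := by
  obtain ⟨CA, EA, hEA⟩ := hA
  obtain ⟨CB, EB, hEB⟩ := hB
  obtain ⟨v0⟩ : Nonempty V := inferInstance
  refine ⟨Option CA × CB, fun p q =>
    ((if p.2 = q.2 then some (EA p.1 q.1) else none), EB p.2 q.2), ?_⟩
  ext γ
  constructor
  · intro hγ
    have hcol : ∀ p q : V × W,
        ((if (γ p).2 = (γ q).2 then some (EA (γ p).1 (γ q).1) else none),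
          EB (γ p).2 (γ q).2)
          = ((if p.2 = q.2 then some (EA p.1 q.1) else none), EB p.2 q.2) :=
      fun p q => hγ p q
    have hsec : ∀ p q : V × W, (γ p).2 = (γ q).2 ↔ p.2 = q.2 := by
      intro p q
      have h1 := congrArg Prod.fst (hcol p q)
      dsimp at h1
      constructor
      · intro h
        by_contra hne
        rw [if_pos h, if_neg hne] at h1
        exact Option.some_ne_none _ h1
      · intro h
        by_contra hne
        rw [if_neg hne, if_pos h] at h1
        exact Option.some_ne_none _ h1.symm
    have hEArel : ∀ (v v' : V) (w : W),
        EA (γ (v, w)).1 (γ (v', w)).1 = EA v v' := by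
      intro v v' w
      have h1 := congrArg Prod.fst (hcol (v, w) (v', w))
      dsimp at h1
      rw [if_pos ((hsec (v, w) (v', w)).2 rfl), if_pos rfl] at h1
      exact Option.some.inj h1
    have hconst : ∀ (v v' : V) (w : W), (γ (v, w)).2 = (γ (v', w)).2 :=
      fun v v' w => (hsec (v, w) (v', w)).2 rfl
    -- the permutation β of W
    have hβbij : Function.Bijective (fun w => (γ (v0, w)).2) := by
      constructor
      · intro w w' h
        exact (hsec (v0, w) (v0, w')).1 h
      · intro u
        refine ⟨(γ.symm (v0, u)).2, ?_⟩
        have h1 : (γ (v0, (γ.symm (v0, u)).2)).2 = (γ (γ.symm (v0, u))).2 := by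
          conv_rhs => rw [show γ.symm (v0, u) = ((γ.symm (v0, u)).1, (γ.symm (v0, u)).2) from rfl]
          exact hconst _ _ _
        show (γ (v0, (γ.symm (v0, u)).2)).2 = u
        rw [h1, Equiv.apply_symm_apply]
    set β : Equiv.Perm W := Equiv.ofBijective _ hβbij with hβdef
    have hβapp : ∀ w, β w = (γ (v0, w)).2 := fun w => rfl
    have hβmem : β ∈ B := by
      rw [← hEB]
      intro w w'
      rw [hβapp, hβapp]
      exact congrArg Prod.snd (hcol (v0, w) (v0, w'))
    -- the permutations α w of V
    have hαbij : ∀ w : W, Function.Bijective (fun v => (γ (v, w)).1) := by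
      intro w
      constructor
      · intro v v' h
        have h2 : γ (v, w) = γ (v', w) := Prod.ext h (hconst v v' w)
        exact congrArg Prod.fst (γ.injective h2)
      · intro u
        set p := γ.symm (u, β w) with hp
        have hγp : γ p = (u, β w) := Equiv.apply_symm_apply γ _
        have hp2 : p.2 = w := by
          apply hβbij.1
          show (γ (v0, p.2)).2 = (γ (v0, w)).2
          rw [← hβapp w]
          have : (γ (v0, p.2)).2 = (γ p).2 := by
            conv_rhs => rw [show p = (p.1, p.2) from rfl]
            exact hconst _ _ _
          rw [this, hγp]
        refine ⟨p.1, ?_⟩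
        show (γ (p.1, w)).1 = u
        rw [← hp2, show (p.1, p.2) = p from rfl, hγp]
    set α : W → Equiv.Perm V := fun w => Equiv.ofBijective _ (hαbij w) with hαdef
    have hαapp : ∀ w v, α w v = (γ (v, w)).1 := fun w v => rfl
    have hαmem : ∀ w, α w ∈ A := by
      intro w
      rw [← hEA]
      intro v v'
      rw [hαapp, hαapp]
      exact hEArel v v' w
    exact ⟨β, hβmem, α, hαmem, fun p => by
      rw [hαapp, hβapp]
      refine Prod.ext rfl ?_
      conv_lhs => rw [show p = (p.1, p.2) from rfl]
      exact hconst _ _ _⟩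
  · rintro ⟨β, hβ, α, hα, h⟩
    have hβ' : ∀ w w', EB (β w) (β w') = EB w w' := by
      rw [← hEB] at hβ; exact hβ
    have hα' : ∀ w v v', EA (α w v) (α w v') = EA v v' := by
      intro w; have := hα w; rw [← hEA] at this; exact this
    intro p q
    show ((if (γ p).2 = (γ q).2 then some (EA (γ p).1 (γ q).1) else none),
        EB (γ p).2 (γ q).2)
        = ((if p.2 = q.2 then some (EA p.1 q.1) else none), EB p.2 q.2)
    rw [h p, h q]
    dsimp
    refine Prod.ext ?_ (hβ' _ _)
    by_cases hpq : p.2 = q.2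
    · rw [if_pos hpq, if_pos (congrArg β hpq)]
      rw [hpq]
      exact congrArg some (hα' q.2 p.1 q.1)
    · rw [if_neg hpq, if_neg (fun hh => hpq (β.injective hh))]
end

section
/- If a permutation group (A,V) does not belong to DGR, then for every permutation group (B,W) the product-action wreath product A Wr B does not belong to GR. -/
open scoped Classical

/-- If `A ∉ DGR`, then for every permutation group `(B, W)` the
product-action wreath product `A Wr B` does not belong to GR. -/
theorem stmt11 {V : Type} [Nontrivial V] (A : Subgroup (Equiv.Perm V))
    (hA : ¬ IsDGR A) :
    ∀ (W : Type) [Nontrivial W] (B : Subgroup (Equiv.Perm W)),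
      ¬ IsGR (prodWr A B) := by
  intro W _ B hGR
  apply hA
  obtain ⟨C, E, hE⟩ := hGR
  refine ⟨Set (V × V), fun v u => orbital A (v, u), ?_⟩
  ext σ
  constructor
  · intro hσ
    have hσ0 : ∀ v u : V, orbital A (σ v, σ u) = orbital A (v, u) := hσ
    have hσ' : ∀ v u : V, ∃ a ∈ A, a v = σ v ∧ a u = σ u := by
      intro v u
      have h1 : (σ v, σ u) ∈ orbital A (v, u) := by
        rw [← hσ0 v u]; exact ⟨1, A.one_mem, rfl⟩
      obtain ⟨a, haA, ha⟩ := h1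
      exact ⟨a, haA, congrArg Prod.fst ha, congrArg Prod.snd ha⟩
    choose a haA ha1 ha2 using hσ'
    let σhat : Equiv.Perm (W → V) :=
      { toFun := fun f => ⇑σ ∘ f
        invFun := fun f => ⇑σ.symm ∘ f
        left_inv := fun f => by funext w; simp
        right_inv := fun f => by funext w; simp }
    have hσhat : σhat ∈ graphAut E := by
      intro f g hfg
      let φ : Equiv.Perm (W → V) :=
        { toFun := fun f' w => a (f w) (g w) (f' w)
          invFun := fun f' w => (a (f w) (g w))⁻¹ (f' w)
          left_inv := fun f' => by funext w; simp
          right_inv := fun f' => by funext w; simp }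
      have hφmem : φ ∈ prodWr A B := ⟨1, B.one_mem, fun w => a (f w) (g w),
        fun w => haA _ _, fun f' w => rfl⟩
      rw [← hE] at hφmem
      have hφf : φ f = σhat f := by funext w; exact ha1 (f w) (g w)
      have hφg : φ g = σhat g := by funext w; exact ha2 (f w) (g w)
      calc E s(σhat f, σhat g) = E s(φ f, φ g) := by rw [hφf, hφg]
      _ = E s(f, g) := hφmem f g hfg
    rw [hE] at hσhat
    obtain ⟨β, hβ, α, hαA, hα⟩ := hσhat
    obtain ⟨w0⟩ := (inferInstance : Nonempty W)
    have hkey : α w0 = σ := by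
      ext x
      have h2 := hα (fun _ => x) w0
      exact h2.symm
    rw [← hkey]; exact hαA w0
  · intro hσA
    show ∀ v u : V, orbital A (σ v, σ u) = orbital A (v, u)
    intro v u
    ext y
    constructor
    · rintro ⟨g, hg, rfl⟩
      exact ⟨g * σ, A.mul_mem hg hσA, rfl⟩
    · rintro ⟨g, hg, rfl⟩
      refine ⟨g * σ⁻¹, A.mul_mem hg (A.inv_mem hσA), ?_⟩
      simp [Equiv.Perm.mul_apply]
end

section
/- For every permutation group (B,W), cl(I_2 Wr B) ⊆ I_2 Wr cl(B), where I_2 acts on a fixed 2-element set. In particular, if B ∈ GR then I_2 Wr B ∈ GR. -/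
open scoped Classical

section Stmt13Aux

variable {V : Type} {W : Type}

private lemma pairOrbit_self (A : Subgroup (Equiv.Perm V)) (p : Sym2 V) : p ∈ pairOrbit A p :=
  ⟨1, A.one_mem, by simp⟩

private lemma pairOrbit_eq_of_mem {A : Subgroup (Equiv.Perm V)} {p q : Sym2 V}
    (h : q ∈ pairOrbit A p) : pairOrbit A q = pairOrbit A p := by
  obtain ⟨a, ha, rfl⟩ := h
  ext r
  constructor
  · rintro ⟨b, hb, rfl⟩
    refine ⟨b * a, A.mul_mem hb ha, ?_⟩
    rw [Sym2.map_map]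
    congr 1
  · rintro ⟨b, hb, rfl⟩
    refine ⟨b * a⁻¹, A.mul_mem hb (A.inv_mem ha), ?_⟩
    rw [Sym2.map_map]
    congr 1
    funext x
    simp

private lemma grCl_map_mem {A : Subgroup (Equiv.Perm V)} {σ : Equiv.Perm V} (hσ : σ ∈ grCl A)
    {p : Sym2 V} (hp : ¬ p.IsDiag) : Sym2.map ⇑σ p ∈ pairOrbit A p := by
  have h := hσ p hp
  rw [← h]
  exact ⟨p, pairOrbit_self A p, rfl⟩

private lemma le_grCl (A : Subgroup (Equiv.Perm V)) : A ≤ grCl A := by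
  intro a ha p hp
  ext q
  constructor
  · rintro ⟨r, ⟨b, hb, rfl⟩, rfl⟩
    refine ⟨a * b, A.mul_mem ha hb, ?_⟩
    rw [Sym2.map_map]
    congr 1
  · rintro ⟨b, hb, rfl⟩
    refine ⟨Sym2.map ⇑(a⁻¹ * b) p, ⟨a⁻¹ * b, A.mul_mem (A.inv_mem ha) hb, rfl⟩, ?_⟩
    rw [Sym2.map_map]
    congr 1
    funext x
    simp

private lemma not_isDiag_map {f : V → V} (hf : Function.Injective f) {p : Sym2 V}
    (hp : ¬p.IsDiag) : ¬(Sym2.map f p).IsDiag := by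
  induction p using Sym2.ind with
  | _ a b =>
    rw [Sym2.map_pair_eq]
    simp only [Sym2.mk_isDiag_iff] at hp ⊢
    exact fun h => hp (hf h)

private lemma nondiag_of_mem_pairOrbit {A : Subgroup (Equiv.Perm V)} {p q : Sym2 V}
    (hp : ¬p.IsDiag) (h : q ∈ pairOrbit A p) : ¬q.IsDiag := by
  obtain ⟨a, _, rfl⟩ := h
  exact not_isDiag_map a.injective hp

private lemma grCl_graphAut_le {C : Type} (E : Sym2 V → C) : grCl (graphAut E) ≤ graphAut E := by
  intro σ hσ v w hvw
  have hp : ¬ (s(v, w) : Sym2 V).IsDiag := by simpa using hvw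
  obtain ⟨a, ha, hmap⟩ := grCl_map_mem hσ hp
  rw [Sym2.map_pair_eq, Sym2.map_pair_eq] at hmap
  rw [← hmap]
  exact ha v w hvw

private lemma graphAut_pairOrbit (A : Subgroup (Equiv.Perm V)) :
    graphAut (pairOrbit A) = grCl A := by
  ext σ
  constructor
  · intro hσ
    have hq : ∀ q : Sym2 V, ¬q.IsDiag → pairOrbit A (Sym2.map ⇑σ q) = pairOrbit A q := by
      intro q hq0
      induction q using Sym2.ind with
      | _ v w =>
        rw [Sym2.map_pair_eq]
        exact hσ v w (by simpa using hq0)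
    intro p hp
    ext q
    constructor
    · rintro ⟨r, hr, rfl⟩
      have hr' : ¬ r.IsDiag := nondiag_of_mem_pairOrbit hp hr
      have h1 : Sym2.map ⇑σ r ∈ pairOrbit A (Sym2.map ⇑σ r) := pairOrbit_self _ _
      rw [hq r hr', pairOrbit_eq_of_mem hr] at h1
      exact h1
    · intro hmem
      have hq' : ¬ q.IsDiag := nondiag_of_mem_pairOrbit hp hmem
      have hq'' : ¬ (Sym2.map ⇑σ⁻¹ q).IsDiag := not_isDiag_map (σ⁻¹).injective hq'
      have h1 : pairOrbit A (Sym2.map ⇑σ (Sym2.map ⇑σ⁻¹ q)) = pairOrbit A (Sym2.map ⇑σ⁻¹ q) :=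
        hq _ hq''
      have h2 : Sym2.map ⇑σ (Sym2.map ⇑σ⁻¹ q) = q := by
        rw [Sym2.map_map]
        have : ⇑σ ∘ ⇑σ⁻¹ = id := by funext x; simp
        rw [this]
        exact congrFun Sym2.map_id q
      rw [h2] at h1
      refine ⟨Sym2.map ⇑σ⁻¹ q, ?_, h2⟩
      rw [← pairOrbit_eq_of_mem hmem, h1]
      exact pairOrbit_self _ _
  · intro hσ v w hvw
    have hp : ¬ (s(v, w) : Sym2 V).IsDiag := by simpa using hvw
    have h1 : Sym2.map ⇑σ s(v, w) ∈ pairOrbit A s(v, w) := grCl_map_mem hσ hp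
    rw [Sym2.map_pair_eq] at h1
    exact pairOrbit_eq_of_mem h1

/-! ### Specifics for `W → Fin 2` -/

private def c0 : W → Fin 2 := fun _ => 0

private def c1 : W → Fin 2 := fun _ => 1

private noncomputable def dl (u : W) : W → Fin 2 := fun w => if w = u then 1 else 0

private lemma c0_ne_c1 [Nonempty W] : (c0 : W → Fin 2) ≠ c1 := by
  intro h
  have := congrFun h (Classical.arbitrary W)
  simp [c0, c1] at this

private lemma dl_ne_c0 (u : W) : dl u ≠ c0 := by
  intro h
  have := congrFun h u
  simp [dl, c0] at this

private lemma dl_ne_c1 [Nontrivial W] (u : W) : dl u ≠ c1 := by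
  intro h
  obtain ⟨v, hv⟩ := exists_ne u
  have := congrFun h v
  simp [dl, c1, hv] at this

private lemma dl_inj {u v : W} (h : dl u = dl v) : u = v := by
  have := congrFun h u
  simp only [dl, if_pos rfl] at this
  by_contra hne
  rw [if_neg hne] at this
  exact absurd this (by decide)

private lemma dl_comp (β : Equiv.Perm W) (u : W) : dl u ∘ ⇑β = dl (β.symm u) := by
  funext w
  simp only [Function.comp_apply, dl, Equiv.apply_eq_iff_eq_symm_apply]

private lemma comp_eq_c0 {β : Equiv.Perm W} {f : W → Fin 2} (h : f ∘ ⇑β = c0) : f = c0 := by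
  funext w
  have := congrFun h (β.symm w)
  simpa [c0] using this

private lemma comp_eq_dl {β : Equiv.Perm W} {f : W → Fin 2} {u : W} (h : f ∘ ⇑β = dl u) :
    f = dl (β u) := by
  have h1 : f = (f ∘ ⇑β) ∘ ⇑β.symm := by funext w; simp
  rw [h1, h, dl_comp β.symm u, Equiv.symm_symm]

private lemma mem_prodWr_bot_iff (B : Subgroup (Equiv.Perm W)) (φ : Equiv.Perm (W → Fin 2)) :
    φ ∈ prodWr (⊥ : Subgroup (Equiv.Perm (Fin 2))) B ↔
      ∃ β ∈ B, ∀ (f : W → Fin 2) (w : W), φ f w = f (β w) := by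
  constructor
  · rintro ⟨β, hβ, α, hα, h⟩
    refine ⟨β, hβ, fun f w => ?_⟩
    have h1 : α w = 1 := by simpa using hα w
    rw [h f w, h1]
    rfl
  · rintro ⟨β, hβ, h⟩
    exact ⟨β, hβ, fun _ => 1, fun _ => Subgroup.mem_bot.mpr rfl,
      fun f w => by rw [h]; rfl⟩

private lemma coe_eq (B : Subgroup (Equiv.Perm W)) {φ : Equiv.Perm (W → Fin 2)}
    (h : φ ∈ prodWr (⊥ : Subgroup (Equiv.Perm (Fin 2))) B) :
    ∃ β ∈ B, ∀ f : W → Fin 2, φ f = f ∘ ⇑β := by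
  obtain ⟨β, hβ, h⟩ := (mem_prodWr_bot_iff B φ).1 h
  exact ⟨β, hβ, fun f => funext fun w => h f w⟩

private lemma comp_c0 (β : Equiv.Perm W) : (c0 : W → Fin 2) ∘ ⇑β = c0 := rfl

private lemma comp_c1 (β : Equiv.Perm W) : (c1 : W → Fin 2) ∘ ⇑β = c1 := rfl

private lemma sigma_c0 [Nontrivial W] (B : Subgroup (Equiv.Perm W))
    {σ : Equiv.Perm (W → Fin 2)} (hσ : σ ∈ grCl (prodWr ⊥ B)) :
    σ c0 = c0 ∧ σ c1 = c1 := by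
  have hnd : ¬ (s(c0, c1) : Sym2 (W → Fin 2)).IsDiag := by simpa using (c0_ne_c1 (W := W))
  obtain ⟨φ, hφ, hmap⟩ := grCl_map_mem hσ hnd
  obtain ⟨β, hβ, hc⟩ := coe_eq B hφ
  rw [Sym2.map_pair_eq, Sym2.map_pair_eq, hc, hc, comp_c0, comp_c1] at hmap
  rcases Sym2.eq_iff.mp hmap with ⟨h1, h2⟩ | ⟨h1, h2⟩
  · exact ⟨h1.symm, h2.symm⟩
  · exfalso
    obtain ⟨u⟩ := (inferInstance : Nonempty W)
    have hnd2 : ¬ (s(c0, dl u) : Sym2 (W → Fin 2)).IsDiag := by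
      simpa using (dl_ne_c0 u).symm
    obtain ⟨φ2, hφ2, hmap2⟩ := grCl_map_mem hσ hnd2
    obtain ⟨β2, hβ2, hc2⟩ := coe_eq B hφ2
    rw [Sym2.map_pair_eq, Sym2.map_pair_eq, hc2, hc2, comp_c0, dl_comp] at hmap2
    rcases Sym2.eq_iff.mp hmap2 with ⟨h3, _⟩ | ⟨_, h4⟩
    · exact c0_ne_c1 (h3.trans h2.symm)
    · exact dl_ne_c1 (β2.symm u) (h4.trans h2.symm)

private lemma key_shift [Nontrivial W] (B : Subgroup (Equiv.Perm W))
    {σ : Equiv.Perm (W → Fin 2)} (hσ : σ ∈ grCl (prodWr ⊥ B))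
    {f : W → Fin 2} (hf : f ≠ c0) : ∃ β ∈ B, σ f = f ∘ ⇑β := by
  have hnd : ¬ (s(c0, f) : Sym2 (W → Fin 2)).IsDiag := by simpa using (Ne.symm hf)
  obtain ⟨φ, hφ, hmap⟩ := grCl_map_mem hσ hnd
  obtain ⟨β, hβ, hc⟩ := coe_eq B hφ
  rw [Sym2.map_pair_eq, Sym2.map_pair_eq, hc, hc, comp_c0,
    (sigma_c0 B hσ).1] at hmap
  rcases Sym2.eq_iff.mp hmap with ⟨_, h2⟩ | ⟨h1, h2⟩
  · exact ⟨β, hβ, h2.symm⟩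
  · exact absurd (comp_eq_c0 h2) hf

private lemma track [Nontrivial W] (B : Subgroup (Equiv.Perm W))
    {σ : Equiv.Perm (W → Fin 2)} (hσ : σ ∈ grCl (prodWr ⊥ B))
    {t t' : W → W} (ht't : ∀ u, t' (t u) = u)
    (hs : ∀ f : W → Fin 2, σ f = f ∘ t') :
    ∀ u v : W, u ≠ v → Sym2.map t s(u, v) ∈ pairOrbit B s(u, v) := by
  intro u v huv
  set f : W → Fin 2 := fun w => if w = u ∨ w = v then 1 else 0 with hf
  have hval : ∀ x, f x = 1 ↔ (x = u ∨ x = v) := by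
    intro x
    by_cases h : x = u ∨ x = v
    · simp [hf, h]
    · simp [hf, h]
  have hf0 : f ≠ c0 := by
    intro h
    have := congrFun h u
    simp [hf, c0] at this
  obtain ⟨β, hβ, hb⟩ := key_shift B hσ hf0
  have heq : ∀ w, f (t' w) = f (β w) := by
    intro w
    have := congrFun ((hs f).symm.trans hb) w
    exact this
  have hu : β (t u) = u ∨ β (t u) = v := by
    have h1 := heq (t u)
    rw [ht't] at h1
    refine (hval _).mp ?_
    rw [← h1]
    exact (hval u).mpr (Or.inl rfl)
  have hv : β (t v) = u ∨ β (t v) = v := by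
    have h1 := heq (t v)
    rw [ht't] at h1
    refine (hval _).mp ?_
    rw [← h1]
    exact (hval v).mpr (Or.inr rfl)
  have hne : t u ≠ t v := by
    intro h
    apply huv
    rw [← ht't u, h, ht't]
  refine ⟨β⁻¹, B.inv_mem hβ, ?_⟩
  rw [Sym2.map_pair_eq, Sym2.map_pair_eq]
  apply Sym2.eq_iff.mpr
  have hβinv : ∀ x y : W, β x = y → (⇑(β⁻¹)) y = x := fun x y h => by
    rw [← h]; simp
  rcases hu with h1 | h1 <;> rcases hv with h2 | h2
  · exact absurd (β.injective (h1.trans h2.symm)) hne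
  · exact Or.inl ⟨hβinv _ _ h1, hβinv _ _ h2⟩
  · exact Or.inr ⟨hβinv _ _ h2, hβinv _ _ h1⟩
  · exact absurd (β.injective (h1.trans h2.symm)) hne

private lemma mem_grCl_of_track (B : Subgroup (Equiv.Perm W)) (e : Equiv.Perm W)
    (h1 : ∀ u v : W, u ≠ v → Sym2.map ⇑e s(u, v) ∈ pairOrbit B s(u, v))
    (h2 : ∀ u v : W, u ≠ v → Sym2.map ⇑e.symm s(u, v) ∈ pairOrbit B s(u, v)) :
    e ∈ grCl B := by
  have key : ∀ (g : W → W), (∀ u v : W, u ≠ v → Sym2.map g s(u, v) ∈ pairOrbit B s(u, v)) →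
      ∀ r : Sym2 W, ¬r.IsDiag → Sym2.map g r ∈ pairOrbit B r := by
    intro g hg r hr
    induction r using Sym2.ind with
    | _ u v => exact hg u v (by simpa using hr)
  intro p hp
  ext q
  constructor
  · rintro ⟨r, hr, rfl⟩
    have hr' : ¬r.IsDiag := nondiag_of_mem_pairOrbit hp hr
    have := key ⇑e h1 r hr'
    rwa [pairOrbit_eq_of_mem hr] at this
  · intro hq
    have hq' : ¬q.IsDiag := nondiag_of_mem_pairOrbit hp hq
    refine ⟨Sym2.map ⇑e.symm q, ?_, ?_⟩
    · have := key ⇑e.symm h2 q hq'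
      rwa [pairOrbit_eq_of_mem hq] at this
    · rw [Sym2.map_map]
      have : ⇑e ∘ ⇑e.symm = id := by funext x; simp
      rw [this]
      exact congrFun Sym2.map_id q

private lemma part1 [Nontrivial W] (B : Subgroup (Equiv.Perm W)) :
    grCl (prodWr (⊥ : Subgroup (Equiv.Perm (Fin 2))) B) ≤
      prodWr (⊥ : Subgroup (Equiv.Perm (Fin 2))) (grCl B) := by
  intro σ hσ
  have hσ' : σ⁻¹ ∈ grCl (prodWr (⊥ : Subgroup (Equiv.Perm (Fin 2))) B) := (grCl _).inv_mem hσ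
  have hdl : ∀ u : W, ∃ v : W, σ (dl u) = dl v := by
    intro u
    obtain ⟨β, hβ, h⟩ := key_shift B hσ (dl_ne_c0 u)
    exact ⟨β.symm u, by rw [h, dl_comp]⟩
  have hdl' : ∀ u : W, ∃ v : W, σ⁻¹ (dl u) = dl v := by
    intro u
    obtain ⟨β, hβ, h⟩ := key_shift B hσ' (dl_ne_c0 u)
    exact ⟨β.symm u, by rw [h, dl_comp]⟩
  choose τ hτ using hdl
  choose τ' hτ' using hdl'
  have hτ'τ : ∀ u, τ' (τ u) = u := by
    intro u
    apply dl_inj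
    rw [← hτ' (τ u), ← hτ u]
    simp
  have hττ' : ∀ u, τ (τ' u) = u := by
    intro u
    apply dl_inj
    rw [← hτ (τ' u), ← hτ' u]
    simp
  have hτinj : Function.Injective τ := fun a b h => by
    rw [← hτ'τ a, h, hτ'τ]
  -- main evaluation claim
  have hmain : ∀ (f : W → Fin 2) (u : W), σ f (τ u) = f u := by
    intro f u
    by_cases h0 : f = c0
    · subst h0
      rw [(sigma_c0 B hσ).1]
      rfl
    · by_cases hd : ∃ v, f = dl v
      · obtain ⟨v, rfl⟩ := hd
        rw [hτ v]
        simp only [dl]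
        by_cases h : u = v
        · rw [if_pos (by rw [h]), if_pos h]
        · rw [if_neg (fun hh => h (hτinj hh)), if_neg h]
      · have hne : dl u ≠ f := fun h => hd ⟨u, h.symm⟩
        obtain ⟨φ, hφ, hmap⟩ := grCl_map_mem hσ (p := s(dl u, f)) (by simpa using hne)
        obtain ⟨β, hβ, hc⟩ := coe_eq B hφ
        rw [Sym2.map_pair_eq, Sym2.map_pair_eq, hc, hc, dl_comp, hτ u] at hmap
        rcases Sym2.eq_iff.mp hmap with ⟨h1, h2⟩ | ⟨h1, h2⟩
        · have h3 : β.symm u = τ u := dl_inj h1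
          rw [← h2, ← h3]
          simp
        · exact absurd ⟨β (τ u), comp_eq_dl h2⟩ hd
  have hsf : ∀ f : W → Fin 2, σ f = f ∘ τ' := by
    intro f
    funext w
    have := hmain f (τ' w)
    rwa [hττ'] at this
  have hsf' : ∀ f : W → Fin 2, σ⁻¹ f = f ∘ τ := by
    intro f
    have h1 : σ (f ∘ τ) = f := by
      rw [hsf]
      funext w
      simp [hττ']
    conv_lhs => rw [← h1]
    exact Equiv.symm_apply_apply σ (f ∘ τ)
  let e : Equiv.Perm W := ⟨τ', τ, hττ', hτ'τ⟩
  have trk : ∀ u v : W, u ≠ v → Sym2.map τ s(u, v) ∈ pairOrbit B s(u, v) :=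
    track B hσ hτ'τ hsf
  have trk' : ∀ u v : W, u ≠ v → Sym2.map τ' s(u, v) ∈ pairOrbit B s(u, v) :=
    track B hσ' hττ' hsf'
  have he : e ∈ grCl B := mem_grCl_of_track B e trk' trk
  exact (mem_prodWr_bot_iff (grCl B) σ).2 ⟨e, he, fun f w => congrFun (hsf f) w⟩

end Stmt13Aux

/-- For every permutation group `(B, W)`, `cl(I₂ Wr B) ⊆ I₂ Wr cl(B)`,
where `I₂` is the trivial group on the fixed two-element set `Fin 2`; in particular,
if `B ∈ GR` then `I₂ Wr B ∈ GR`. -/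

theorem stmt13 {W : Type} [Nontrivial W] (B : Subgroup (Equiv.Perm W)) :
    grCl (prodWr (⊥ : Subgroup (Equiv.Perm (Fin 2))) B) ≤
        prodWr (⊥ : Subgroup (Equiv.Perm (Fin 2))) (grCl B) ∧
      (IsGR B → IsGR (prodWr (⊥ : Subgroup (Equiv.Perm (Fin 2))) B)) := by
  refine ⟨part1 B, ?_⟩
  rintro ⟨C, E, hE⟩
  refine ⟨Set (Sym2 (W → Fin 2)), pairOrbit (prodWr (⊥ : Subgroup (Equiv.Perm (Fin 2))) B), ?_⟩
  rw [graphAut_pairOrbit]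
  apply le_antisymm
  · refine le_trans (part1 B) ?_
    have hB : grCl B = B := le_antisymm (hE ▸ grCl_graphAut_le E) (le_grCl B)
    rw [hB]
  · exact le_grCl _
end

section
/- Let W be a finite set of cardinality n, let A_n denote the alternating group acting on W, and let (A,V) be any permutation group. If rank(A) < n, or rank(A) = n and nsp(A) is odd, then the product-action wreath product A Wr A_n does not belong to GR. -/
open scoped Classical

/-! ### Auxiliary material for stmt19 -/

/-- The wreath element determined by a top permutation `β` and bottom family `α`. -/
def mkWr {V W : Type} (β : Equiv.Perm W) (α : W → Equiv.Perm V) : Equiv.Perm (W → V) where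
  toFun f := fun w => α w (f (β w))
  invFun f := fun w => (α (β⁻¹ w))⁻¹ (f (β⁻¹ w))
  left_inv f := by funext w; simp
  right_inv f := by funext w; simp

lemma mkWr_apply {V W : Type} (β : Equiv.Perm W) (α : W → Equiv.Perm V) (f : W → V) (w : W) :
    mkWr β α f w = α w (f (β w)) := rfl

lemma mkWr_mem {V W : Type} {A : Subgroup (Equiv.Perm V)} {B : Subgroup (Equiv.Perm W)}
    {β : Equiv.Perm W} {α : W → Equiv.Perm V} (hβ : β ∈ B) (hα : ∀ w, α w ∈ A) :
    mkWr β α ∈ prodWr A B :=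
  ⟨β, hβ, α, hα, fun _ _ => rfl⟩

/-- The sign of an involution is `-1` to the half of the number of moved points. -/
lemma sign_of_involution {X : Type} [Fintype X] [DecidableEq X] :
    ∀ (c : ℕ) (π : Equiv.Perm X), (∀ x, π (π x) = x) → π.support.card = c →
      Equiv.Perm.sign π = (-1) ^ (c / 2) := by
  intro c
  induction c using Nat.strong_induction_on with
  | _ c IH =>
    intro π hπ hc
    by_cases h1 : π = 1
    · subst h1
      simp at hc
      subst hc
      simp
    · obtain ⟨a, ha⟩ : ∃ a, π a ≠ a := by
        by_contra h
        push_neg at h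
        exact h1 (Equiv.ext h)
      set b := π a with hb
      have hba : π b = a := hπ a
      have hne : b ≠ a := ha
      set π' := Equiv.swap a b * π with hπ'
      have hπ'app : ∀ x, π' x = Equiv.swap a b (π x) := fun x => rfl
      have hπ'a : π' a = a := by rw [hπ'app, ← hb, Equiv.swap_apply_right]
      have hπ'b : π' b = b := by rw [hπ'app, hba, Equiv.swap_apply_left]
      have hother : ∀ x, x ≠ a → x ≠ b → π' x = π x := by
        intro x hxa hxb
        rw [hπ'app]
        apply Equiv.swap_apply_of_ne_of_ne
        · intro h; exact hxb (π.injective (h.trans hba.symm))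
        · intro h; exact hxa (π.injective (h.trans hb))
      have hinv' : ∀ x, π' (π' x) = x := by
        intro x
        by_cases hxa : x = a
        · rw [hxa, hπ'a, hπ'a]
        by_cases hxb : x = b
        · rw [hxb, hπ'b, hπ'b]
        · rw [hother x hxa hxb]
          by_cases hfix : π x = x
          · rw [hfix, hother x hxa hxb, hfix]
          · have h1' : π x ≠ a := fun h => hxb (π.injective (h.trans hba.symm))
            have h2' : π x ≠ b := fun h => hxa (π.injective (h.trans hb))
            rw [hother _ h1' h2', hπ x]
      have hsupp : π'.support = π.support \ {a, b} := by
        ext x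
        simp only [Equiv.Perm.mem_support, Finset.mem_sdiff, Finset.mem_insert,
          Finset.mem_singleton]
        constructor
        · intro hx
          by_cases hxa : x = a
          · exact absurd (hxa ▸ hπ'a) (hxa ▸ hx)
          by_cases hxb : x = b
          · exact absurd (hxb ▸ hπ'b) (hxb ▸ hx)
          · rw [hother x hxa hxb] at hx
            exact ⟨hx, fun h => h.elim hxa hxb⟩
        · rintro ⟨hx, hab⟩
          push_neg at hab
          rw [hother x hab.1 hab.2]
          exact hx
      have hmema : a ∈ π.support := Equiv.Perm.mem_support.mpr ha
      have hmemb : b ∈ π.support := Equiv.Perm.mem_support.mpr (by rw [hba]; exact fun h => hne h.symm)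
      have hcard : π'.support.card = c - 2 := by
        rw [hsupp, Finset.card_sdiff_of_subset]
        · rw [hc]
          congr 1
          rw [Finset.card_insert_of_notMem
            (by simp only [Finset.mem_singleton]; exact fun h => hne h.symm),
            Finset.card_singleton]
        · intro x hx
          simp only [Finset.mem_insert, Finset.mem_singleton] at hx
          rcases hx with h | h
          · exact h ▸ hmema
          · exact h ▸ hmemb
      have hc2 : 2 ≤ c := by
        rw [← hc]
        have : ({a, b} : Finset X) ⊆ π.support := by
          intro x hx
          simp only [Finset.mem_insert, Finset.mem_singleton] at hx
          rcases hx with h | h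
          · exact h ▸ hmema
          · exact h ▸ hmemb
        calc 2 = ({a, b} : Finset X).card := by
                rw [Finset.card_insert_of_notMem
                  (by simp only [Finset.mem_singleton]; exact fun h => hne h.symm),
                  Finset.card_singleton]
          _ ≤ π.support.card := Finset.card_le_card this
      have hsign' := IH (c - 2) (by omega) π' hinv' hcard
      have hππ' : π = Equiv.swap a b * π' := by
        rw [hπ', ← mul_assoc, Equiv.swap_mul_self, one_mul]
      rw [hππ', map_mul, Equiv.Perm.sign_swap (hne.symm), hsign']
      have : c / 2 = (c - 2) / 2 + 1 := by omega
      rw [this, pow_succ]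
      exact (mul_comm _ _)

lemma swap_image_orbital {V : Type} (A : Subgroup (Equiv.Perm V)) (x : V × V) :
    Prod.swap '' orbital A x = orbital A x.swap := by
  ext y
  constructor
  · rintro ⟨z, ⟨a, ha, hz⟩, rfl⟩
    exact ⟨a, ha, by rw [← hz]; rfl⟩
  · rintro ⟨a, ha, rfl⟩
    exact ⟨(a x.1, a x.2), ⟨a, ha, rfl⟩, rfl⟩

lemma self_mem_orbital {V : Type} (A : Subgroup (Equiv.Perm V)) (x : V × V) :
    x ∈ orbital A x :=
  ⟨1, A.one_mem, rfl⟩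

lemma exists_odd_fix {V W : Type} [Nontrivial V] [Fintype W] [DecidableEq W]
    {n : ℕ} (hn : Fintype.card W = n) (A : Subgroup (Equiv.Perm V))
    (hrank : orbRank A < (n : Cardinal) ∨
      (orbRank A = (n : Cardinal) ∧ Odd (nsp A)))
    (f g : W → V) :
    ∃ (β : Equiv.Perm W) (α : W → Equiv.Perm V),
      Equiv.Perm.sign β = -1 ∧ (∀ w, α w ∈ A) ∧
        Sym2.map ⇑(mkWr β α) s(f, g) = s(f, g) := by
  classical
  set Orb := {O : Set (V × V) // ∃ x, O = orbital A x} with hOrb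
  set θ : W → Orb := fun w => ⟨orbital A (f w, g w), ⟨(f w, g w), rfl⟩⟩ with hθ
  by_cases hinj : Function.Injective θ
  · -- injective case: rank must equal n and nsp is odd
    have hle : (n : Cardinal) ≤ orbRank A := by
      have h := Cardinal.mk_le_of_injective hinj
      rw [Cardinal.mk_fintype, hn] at h
      exact h
    rcases hrank with h | ⟨heq, hodd⟩
    · exact absurd h (not_lt.mpr hle)
    obtain ⟨e0⟩ : Nonempty (Orb ≃ Fin n) :=
      Cardinal.eq.mp (heq.trans (Cardinal.mk_fin n).symm)
    letI : Fintype Orb := Fintype.ofEquiv _ e0.symm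
    have hcardOrb : Fintype.card Orb = n := by
      rw [Fintype.card_congr e0, Fintype.card_fin]
    have hbij : Function.Bijective θ :=
      (Fintype.bijective_iff_injective_and_card θ).mpr ⟨hinj, by rw [hn, hcardOrb]⟩
    set e : W ≃ Orb := Equiv.ofBijective θ hbij with he
    have hswapswap : Prod.swap ∘ (Prod.swap : V × V → V × V) = id :=
      funext fun p => Prod.swap_swap p
    set πfun : Orb → Orb := fun O => ⟨Prod.swap '' O.1, by
      obtain ⟨x, hx⟩ := O.2
      exact ⟨x.swap, by rw [hx, swap_image_orbital]⟩⟩ with hπfun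
    have hππ : ∀ O, πfun (πfun O) = O := by
      intro O
      apply Subtype.ext
      show Prod.swap '' (Prod.swap '' O.1) = O.1
      rw [← Set.image_comp, hswapswap, Set.image_id]
    set π : Equiv.Perm Orb := ⟨πfun, πfun, hππ, hππ⟩ with hπ
    have hπapp : ∀ O : Orb, (π O).1 = Prod.swap '' O.1 := fun O => rfl
    set β₀ : Equiv.Perm W := (Equiv.permCongr e.symm) π with hβ₀
    have hβ₀app : ∀ w, β₀ w = e.symm (π (e w)) := by
      intro w
      rw [hβ₀, Equiv.permCongr_apply, Equiv.symm_symm]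
    have hkey : ∀ w, orbital A (f (β₀ w), g (β₀ w)) = orbital A (g w, f w) := by
      intro w
      have h1 : e (β₀ w) = π (e w) := by rw [hβ₀app, Equiv.apply_symm_apply]
      have h2 : (e (β₀ w)).1 = orbital A (f (β₀ w), g (β₀ w)) := rfl
      have h3 : (e w).1 = orbital A (f w, g w) := rfl
      rw [← h2, h1, hπapp, h3, swap_image_orbital]
      rfl
    have hex : ∀ w, ∃ a : Equiv.Perm V, a ∈ A ∧
        (a (f (β₀ w)), a (g (β₀ w))) = (g w, f w) := by
      intro w
      have hmem : (g w, f w) ∈ orbital A (f (β₀ w), g (β₀ w)) := by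
        rw [hkey w]
        exact self_mem_orbital A (g w, f w)
      obtain ⟨a, ha, hfa⟩ := hmem
      exact ⟨a, ha, hfa⟩
    choose α hα1 hα2 using hex
    have hπinv : ∀ O, π (π O) = O := hππ
    refine ⟨β₀, α, ?_, hα1, ?_⟩
    · have hsgn : Equiv.Perm.sign β₀ = Equiv.Perm.sign π :=
        Equiv.Perm.sign_permCongr e.symm π
      have hcard1 : Fintype.card {O : Orb // π O ≠ O} = π.support.card := by
        rw [Fintype.card_subtype]
        congr 1
      have hcard2 : Nat.card {O : Set (V × V) //
          (∃ x, O = orbital A x) ∧ Prod.swap '' O ≠ O} = π.support.card := by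
        rw [Nat.card_congr (Equiv.subtypeSubtypeEquivSubtypeInter
          (fun O : Set (V × V) => ∃ x, O = orbital A x)
          (fun O => Prod.swap '' O ≠ O)).symm]
        rw [Nat.card_eq_fintype_card]
        rw [← hcard1]
        apply Fintype.card_congr
        apply Equiv.subtypeEquivRight
        intro O
        constructor
        · intro h hOO
          exact h (by rw [← hπapp]; exact congrArg Subtype.val hOO)
        · intro h hOO
          exact h (Subtype.ext (by rw [hπapp]; exact hOO))
      have hnsp : nsp A = π.support.card / 2 := by
        rw [nsp, hcard2]
      rw [hsgn, sign_of_involution π.support.card π hπinv rfl]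
      exact Odd.neg_one_pow (hnsp ▸ hodd)
    · have hσf : mkWr β₀ α f = g := funext fun w => congrArg Prod.fst (hα2 w)
      have hσg : mkWr β₀ α g = f := funext fun w => congrArg Prod.snd (hα2 w)
      rw [Sym2.map_pair_eq, hσf, hσg, Sym2.eq_swap]
  · -- non-injective case
    obtain ⟨w₁, w₂, hθeq, hne⟩ := Function.not_injective_iff.mp hinj
    have horb : orbital A (f w₁, g w₁) = orbital A (f w₂, g w₂) :=
      congrArg Subtype.val hθeq
    have hmem : (f w₂, g w₂) ∈ orbital A (f w₁, g w₁) :=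
      horb ▸ self_mem_orbital A (f w₂, g w₂)
    obtain ⟨a, ha, hfa⟩ := hmem
    have hfa1 : a (f w₁) = f w₂ := congrArg Prod.fst hfa
    have hfa2 : a (g w₁) = g w₂ := congrArg Prod.snd hfa
    refine ⟨Equiv.swap w₁ w₂,
      fun w => if w = w₁ then a⁻¹ else if w = w₂ then a else 1,
      Equiv.Perm.sign_swap hne, ?_, ?_⟩
    · intro w
      dsimp only
      split_ifs
      · exact A.inv_mem ha
      · exact ha
      · exact A.one_mem
    · have key : ∀ h : W → V, a (h w₁) = h w₂ →
          mkWr (Equiv.swap w₁ w₂) (fun w => if w = w₁ then a⁻¹ else if w = w₂ then a else 1) h = h := by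
        intro h hh
        funext w
        rw [mkWr_apply]
        by_cases h1 : w = w₁
        · subst h1
          rw [if_pos rfl, Equiv.swap_apply_left, ← hh]
          simp
        by_cases h2 : w = w₂
        · subst h2
          rw [if_neg h1, if_pos rfl, Equiv.swap_apply_right, hh]
        · rw [if_neg h1, if_neg h2, Equiv.swap_apply_of_ne_of_ne h1 h2]
          rfl
      rw [Sym2.map_pair_eq, key f hfa1, key g hfa2]

lemma prodWr_mono_top {V W : Type} {A : Subgroup (Equiv.Perm V)}
    {B B' : Subgroup (Equiv.Perm W)} (h : B ≤ B') :
    prodWr A B ≤ prodWr A B' := by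
  rintro ψ ⟨β, hβ, α, hα, hrep⟩
  exact ⟨β, h hβ, α, hα, hrep⟩

/-- Any member of a group maps each pair orbit onto itself. -/
lemma map_pairOrbit_of_mem {V : Type} {B : Subgroup (Equiv.Perm V)}
    {σ : Equiv.Perm V} (hσ : σ ∈ B) (p : Sym2 V) :
    Sym2.map ⇑σ '' pairOrbit B p = pairOrbit B p := by
  ext q
  constructor
  · rintro ⟨r, ⟨a, ha, hr⟩, rfl⟩
    refine ⟨σ * a, B.mul_mem hσ ha, ?_⟩
    rw [← hr, Equiv.Perm.coe_mul, Sym2.map_comp]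
    rfl
  · rintro ⟨a, ha, rfl⟩
    refine ⟨Sym2.map ⇑(σ⁻¹ * a) p, ⟨σ⁻¹ * a, B.mul_mem (B.inv_mem hσ) ha, rfl⟩, ?_⟩
    have hco : (⇑σ ∘ ⇑(σ⁻¹ * a)) = ⇑a := by
      funext x
      simp [Equiv.Perm.mul_apply]
    calc Sym2.map ⇑σ (Sym2.map ⇑(σ⁻¹ * a) p)
        = Sym2.map (⇑σ ∘ ⇑(σ⁻¹ * a)) p := by rw [Sym2.map_comp]; rfl
      _ = Sym2.map ⇑a p := by rw [hco]

/-- Under the rank hypothesis, pair orbits of `A Wr Aₙ` coincide with those of `A Wr Sₙ`. -/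
lemma pairOrbit_alt_eq_top {V W : Type} [Nontrivial V] [Fintype W] [DecidableEq W]
    {n : ℕ} (hn : Fintype.card W = n) (A : Subgroup (Equiv.Perm V))
    (hrank : orbRank A < (n : Cardinal) ∨
      (orbRank A = (n : Cardinal) ∧ Odd (nsp A)))
    (p : Sym2 (W → V)) :
    pairOrbit (prodWr A (alternatingGroup W)) p = pairOrbit (prodWr A ⊤) p := by
  apply Set.Subset.antisymm
  · rintro q ⟨ψ, hψ, hq⟩
    exact ⟨ψ, prodWr_mono_top le_top hψ, hq⟩
  · induction p using Sym2.ind with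
  | _ f g =>
    rintro q ⟨ψ, ⟨β, -, α, hα, hrep⟩, hq⟩
    rcases Int.units_eq_one_or (Equiv.Perm.sign β) with hsgn | hsgn
    · exact ⟨ψ, ⟨β, Equiv.Perm.mem_alternatingGroup.mpr hsgn, α, hα, hrep⟩, hq⟩
    · obtain ⟨β₀, α₀, hsgn₀, hα₀, hfix⟩ := exists_odd_fix hn A hrank f g
      refine ⟨ψ * mkWr β₀ α₀, ?_, ?_⟩
      · refine ⟨β₀ * β, Equiv.Perm.mem_alternatingGroup.mpr
          (by rw [map_mul, hsgn₀, hsgn]; norm_num),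
          fun w => α w * α₀ (β w), fun w => A.mul_mem (hα w) (hα₀ (β w)),
          fun h w => ?_⟩
        have h0 : (ψ * mkWr β₀ α₀) h = ψ (mkWr β₀ α₀ h) := rfl
        rw [h0, hrep (mkWr β₀ α₀ h) w, mkWr_apply]
        rfl
      · have hcomp : Sym2.map ⇑(ψ * mkWr β₀ α₀) s(f, g)
            = Sym2.map ⇑ψ (Sym2.map ⇑(mkWr β₀ α₀) s(f, g)) := by
          rw [Equiv.Perm.coe_mul, Sym2.map_comp]
          rfl
        rw [hcomp, hfix, hq]

/-- If a group is the automorphism group of a colored graph, it contains its 2*-closure. -/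
lemma grCl_le_of_graphAut {V : Type} {C : Type} {E : Sym2 V → C}
    {B : Subgroup (Equiv.Perm V)} (hE : graphAut E = B) :
    grCl B ≤ B := by
  intro σ hσ
  rw [← hE]
  intro v w hvw
  have hp : ¬ (s(v, w)).IsDiag := by
    rw [Sym2.mk_isDiag_iff]
    exact hvw
  have hmem : s(σ v, σ w) ∈ pairOrbit B s(v, w) := by
    rw [← hσ s(v, w) hp]
    refine ⟨s(v, w), ⟨1, B.one_mem, ?_⟩, ?_⟩
    · rw [Equiv.Perm.coe_one, Sym2.map_id, id_eq]
    · rw [Sym2.map_pair_eq]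
  obtain ⟨a, ha, hmap⟩ := hmem
  rw [Sym2.map_pair_eq] at hmap
  rw [← hE] at ha
  rw [← hmap]
  exact ha v w hvw

/-- The odd "coordinate shuffle" is not a member of `A Wr Aₙ`. -/
lemma mkWr_swap_not_mem {V W : Type} [Nontrivial V] [Fintype W] [DecidableEq W]
    (A : Subgroup (Equiv.Perm V)) {w₁ w₂ : W} (hne : w₁ ≠ w₂) :
    mkWr (Equiv.swap w₁ w₂) (fun _ => 1) ∉ prodWr A (alternatingGroup W) := by
  rintro ⟨β, hβ, α, hα, hrep⟩
  have happ : ∀ (h : W → V) (w : W), h (Equiv.swap w₁ w₂ w) = α w (h (β w)) := by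
    intro h w
    have := hrep h w
    rwa [mkWr_apply, Equiv.Perm.one_apply] at this
  have hα1 : ∀ w (v : V), α w v = v := by
    intro w v
    have := happ (fun _ => v) w
    exact this.symm
  have hββ : ∀ w, Equiv.swap w₁ w₂ w = β w := by
    intro w
    by_contra hcon
    obtain ⟨v₁, v₂, hv⟩ := exists_pair_ne V
    have := happ (fun x => if x = Equiv.swap w₁ w₂ w then v₁ else v₂) w
    rw [if_pos rfl, hα1, if_neg (fun hh => hcon hh.symm)] at this
    exact hv this
  have hβeq : β = Equiv.swap w₁ w₂ := Equiv.ext fun w => (hββ w).symm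
  have hs := Equiv.Perm.mem_alternatingGroup.mp hβ
  rw [hβeq, Equiv.Perm.sign_swap hne] at hs
  exact absurd hs (by decide)

theorem stmt19' {V W : Type} [Nontrivial V] [Nontrivial W] [Fintype W] [DecidableEq W]
    (n : ℕ) (hn : Fintype.card W = n)
    (A : Subgroup (Equiv.Perm V))
    (hrank : orbRank A < (n : Cardinal) ∨
      (orbRank A = (n : Cardinal) ∧ Odd (nsp A))) :
    ¬ IsGR (prodWr A (alternatingGroup W)) := by
  rintro ⟨C, E, hE⟩
  obtain ⟨w₁, w₂, hne⟩ := exists_pair_ne W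
  set Φ : Equiv.Perm (W → V) := mkWr (Equiv.swap w₁ w₂) (fun _ => 1) with hΦ
  have hΦtop : Φ ∈ prodWr A (⊤ : Subgroup (Equiv.Perm W)) :=
    mkWr_mem trivial (fun _ => A.one_mem)
  have hΦcl : Φ ∈ grCl (prodWr A (alternatingGroup W)) := by
    intro p hp
    rw [pairOrbit_alt_eq_top hn A hrank p]
    exact map_pairOrbit_of_mem hΦtop p
  exact mkWr_swap_not_mem A hne (grCl_le_of_graphAut hE hΦcl)

/-- Let `W` be finite of cardinality `n` and `(A, V)` any permutation group.
If `rank(A) < n`, or `rank(A) = n` and `nsp(A)` is odd, then `A Wr Aₙ ∉ GR`, where `Aₙ`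
is the alternating group on `W`. -/
theorem stmt19 {V W : Type} [Nontrivial V] [Nontrivial W] [Fintype W] [DecidableEq W]
    (n : ℕ) (hn : Fintype.card W = n)
    (A : Subgroup (Equiv.Perm V))
    (hrank : orbRank A < (n : Cardinal) ∨
      (orbRank A = (n : Cardinal) ∧ Odd (nsp A))) :
    ¬ IsGR (prodWr A (alternatingGroup W)) := by
  exact stmt19' n hn A hrank
end
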